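/- Let n be a positive odd integer, let d be a nonzero rational number, and let x be a p-adic integer (for an odd prime p). Then the following chain of identities holds in ℚ_p: ∑_{k=0}^{(n−1)/2} (x² + x − (1+4d)k² − (1−2d)k) · d^{−k} C(x,k)C(x+k,k)/C(2k,k) = −d(n+1) + ((n+1)/2)·∑_{k=0}^{(n−1)/2} (x² + x + 2d − (1+4d)k² − (1+2d)k) · d^{−k} C(x,k)C(x+k,k)/((k+1)C(2k,k)) = n·∑_{k=0}^{(n−1)/2} (x² + x − (1+4d)k² − (1+2d)k) · d^{−k} C(x,k)C(x+k,k)/((2k+1)C(2k,k)). -/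

import Mathlib

/-!
Write `a k = d⁻ᵏ C(x,k) C(x+k,k) / C(2k,k)`. Then `a 0 = 1` and
`2d(k+1)(2k+1) a (k+1) = (x-k)(x+k+1) a k`, and with this recurrence each of the three sums
telescopes: its `k`-th summand is `F (k+1) - F k` for `F k = 2dk(2k-1) a k`, `2d(2k-1) a k` and
`2dk a k` respectively, so for odd `n` all three sides equal `d n (n+1) a ((n+1)/2)`.
-/

/-- Generalized binomial coefficient `C(x, k) = x(x-1)⋯(x-k+1)/k!` in `ℚ_[p]`. -/
noncomputable def gbinom (p : ℕ) [Fact p.Prime] (x : ℚ_[p]) (k : ℕ) : ℚ_[p] :=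
  (∏ i ∈ Finset.range k, (x - (i : ℚ_[p]))) / (k.factorial : ℚ_[p])

open Finset

section Telescoping

theorem sum_range_mul_eq_of_ratio {K : Type*} [CommRing K] (d X : K) (a : ℕ → K)
    (ha : ∀ k : ℕ, 2 * d * (k + 1) * (2 * k + 1) * a (k + 1) = (X - k) * (X + k + 1) * a k)
    (m : ℕ) :
    ∑ k ∈ range (m + 1), (X ^ 2 + X - (1 + 4 * d) * (k : K) ^ 2 - (1 - 2 * d) * k) * a k =
      2 * d * (m + 1) * (2 * m + 1) * a (m + 1) := by
  have hstep : ∀ k : ℕ, (X ^ 2 + X - (1 + 4 * d) * (k : K) ^ 2 - (1 - 2 * d) * k) * a k =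
      2 * d * ((k + 1 : ℕ) : K) * (2 * ((k + 1 : ℕ) : K) - 1) * a (k + 1) -
        2 * d * k * (2 * k - 1) * a k := fun k => by
    push_cast; linear_combination -ha k
  simp only [hstep, sum_range_sub (fun k : ℕ => 2 * d * (k : K) * (2 * k - 1) * a k)]
  push_cast; ring

variable {K : Type*} [Field K] [CharZero K]

theorem sum_range_mul_div_succ_eq_of_ratio (d X : K) (a : ℕ → K)
    (ha : ∀ k : ℕ, 2 * d * (k + 1) * (2 * k + 1) * a (k + 1) = (X - k) * (X + k + 1) * a k)
    (m : ℕ) :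
    ∑ k ∈ range (m + 1),
        (X ^ 2 + X + 2 * d - (1 + 4 * d) * (k : K) ^ 2 - (1 + 2 * d) * k) * (a k / (k + 1)) =
      2 * d * (2 * m + 1) * a (m + 1) + 2 * d * a 0 := by
  have hstep : ∀ k : ℕ,
      (X ^ 2 + X + 2 * d - (1 + 4 * d) * (k : K) ^ 2 - (1 + 2 * d) * k) * (a k / (k + 1)) =
        2 * d * (2 * ((k + 1 : ℕ) : K) - 1) * a (k + 1) - 2 * d * (2 * k - 1) * a k := fun k => by
    have hk : (k : K) + 1 ≠ 0 := Nat.cast_add_one_ne_zero k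
    rw [← mul_div_assoc, div_eq_iff hk]
    push_cast; linear_combination -ha k
  simp only [hstep, sum_range_sub (fun k : ℕ => 2 * d * (2 * (k : K) - 1) * a k)]
  push_cast; ring

theorem sum_range_mul_div_two_mul_succ_eq_of_ratio (d X : K) (a : ℕ → K)
    (ha : ∀ k : ℕ, 2 * d * (k + 1) * (2 * k + 1) * a (k + 1) = (X - k) * (X + k + 1) * a k)
    (m : ℕ) :
    ∑ k ∈ range (m + 1),
        (X ^ 2 + X - (1 + 4 * d) * (k : K) ^ 2 - (1 + 2 * d) * k) * (a k / (2 * k + 1)) =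
      2 * d * (m + 1) * a (m + 1) := by
  have hstep : ∀ k : ℕ,
      (X ^ 2 + X - (1 + 4 * d) * (k : K) ^ 2 - (1 + 2 * d) * k) * (a k / (2 * k + 1)) =
        2 * d * ((k + 1 : ℕ) : K) * a (k + 1) - 2 * d * k * a k := fun k => by
    have hk : 2 * (k : K) + 1 ≠ 0 := by exact_mod_cast (2 * k).succ_ne_zero
    rw [← mul_div_assoc, div_eq_iff hk]
    push_cast; linear_combination -ha k
  simp only [hstep, sum_range_sub (fun k : ℕ => 2 * d * (k : K) * a k)]
  push_cast; ring

end Telescoping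

section Weight

variable {p : ℕ} [Fact p.Prime]

theorem gbinom_zero (x : ℚ_[p]) : gbinom p x 0 = 1 := by
  simp [gbinom]

theorem gbinom_succ (x : ℚ_[p]) (k : ℕ) :
    ((k : ℚ_[p]) + 1) * gbinom p x (k + 1) = (x - k) * gbinom p x k := by
  simp only [gbinom, prod_range_succ, Nat.factorial_succ, Nat.cast_mul, Nat.cast_succ]
  field_simp

theorem gbinom_add_one_succ (x : ℚ_[p]) (k : ℕ) :
    ((k : ℚ_[p]) + 1) * gbinom p (x + 1) (k + 1) = (x + 1) * gbinom p x k := by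
  simp only [gbinom, prod_range_succ', Nat.factorial_succ, Nat.cast_mul, Nat.cast_succ,
    Nat.cast_zero, add_sub_add_right_eq_sub, sub_zero]
  field_simp

noncomputable def binomWeight (p : ℕ) [Fact p.Prime] (d : ℚ) (x : ℚ_[p]) (k : ℕ) : ℚ_[p] :=
  (d : ℚ_[p]) ^ (-(k : ℤ)) * gbinom p x k * gbinom p (x + k) k / ((2 * k).choose k : ℕ)

theorem binomWeight_zero (d : ℚ) (x : ℚ_[p]) : binomWeight p d x 0 = 1 := by
  simp [binomWeight, gbinom_zero]

theorem binomWeight_succ {d : ℚ} (hd : d ≠ 0) (x : ℚ_[p]) (k : ℕ) :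
    2 * (d : ℚ_[p]) * (k + 1) * (2 * k + 1) * binomWeight p d x (k + 1) =
      (x - k) * (x + k + 1) * binomWeight p d x k := by
  have hd' : (d : ℚ_[p]) ≠ 0 := Rat.cast_ne_zero.mpr hd
  have hk : (k : ℚ_[p]) + 1 ≠ 0 := Nat.cast_add_one_ne_zero k
  have h2k : 2 * (k : ℚ_[p]) + 1 ≠ 0 := by exact_mod_cast (2 * k).succ_ne_zero
  have hpow : (d : ℚ_[p]) ^ (-((k + 1 : ℕ) : ℤ)) = (d : ℚ_[p]) ^ (-(k : ℤ)) / d := by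
    rw [Nat.cast_succ, neg_add, zpow_add₀ hd', zpow_neg_one, div_eq_mul_inv]
  have hx : gbinom p x (k + 1) = (x - k) * gbinom p x k / (k + 1) := by
    rw [eq_div_iff hk, mul_comm, gbinom_succ]
  have hxk : gbinom p (x + (k + 1 : ℕ)) (k + 1) = (x + k + 1) * gbinom p (x + k) k / (k + 1) := by
    rw [eq_div_iff hk, mul_comm, Nat.cast_succ, ← add_assoc, gbinom_add_one_succ]
  have hcentral : ((2 * (k + 1)).choose (k + 1) : ℚ_[p]) =
      2 * (2 * k + 1) * ((2 * k).choose k : ℕ) / (k + 1) := by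
    rw [eq_div_iff hk, mul_comm]
    exact_mod_cast Nat.succ_mul_centralBinom_succ k
  rw [binomWeight, binomWeight, hpow, hx, hxk, hcentral]
  field_simp

end Weight

theorem stmt13_general (p : ℕ) [Fact p.Prime]
    (n : ℕ) (hodd : Odd n) (d : ℚ) (hd0 : d ≠ 0) (x : ℤ_[p]) :
    (∑ k ∈ Finset.range ((n - 1) / 2 + 1),
        ((x : ℚ_[p]) ^ 2 + (x : ℚ_[p]) - (1 + 4 * (d : ℚ_[p])) * (k : ℚ_[p]) ^ 2
            - (1 - 2 * (d : ℚ_[p])) * (k : ℚ_[p])) *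
          ((d : ℚ_[p]) ^ (-(k : ℤ)) * gbinom p (x : ℚ_[p]) k * gbinom p ((x : ℚ_[p]) + (k : ℚ_[p])) k
            / (((2 * k).choose k : ℕ) : ℚ_[p]))) =
      -(d : ℚ_[p]) * ((n : ℚ_[p]) + 1) + (((n : ℚ_[p]) + 1) / 2) *
        ∑ k ∈ Finset.range ((n - 1) / 2 + 1),
          ((x : ℚ_[p]) ^ 2 + (x : ℚ_[p]) + 2 * (d : ℚ_[p])
              - (1 + 4 * (d : ℚ_[p])) * (k : ℚ_[p]) ^ 2
              - (1 + 2 * (d : ℚ_[p])) * (k : ℚ_[p])) *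
            ((d : ℚ_[p]) ^ (-(k : ℤ)) * gbinom p (x : ℚ_[p]) k *
                gbinom p ((x : ℚ_[p]) + (k : ℚ_[p])) k
              / (((k : ℚ_[p]) + 1) * (((2 * k).choose k : ℕ) : ℚ_[p]))) ∧
    -(d : ℚ_[p]) * ((n : ℚ_[p]) + 1) + (((n : ℚ_[p]) + 1) / 2) *
        (∑ k ∈ Finset.range ((n - 1) / 2 + 1),
          ((x : ℚ_[p]) ^ 2 + (x : ℚ_[p]) + 2 * (d : ℚ_[p])
              - (1 + 4 * (d : ℚ_[p])) * (k : ℚ_[p]) ^ 2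
              - (1 + 2 * (d : ℚ_[p])) * (k : ℚ_[p])) *
            ((d : ℚ_[p]) ^ (-(k : ℤ)) * gbinom p (x : ℚ_[p]) k *
                gbinom p ((x : ℚ_[p]) + (k : ℚ_[p])) k
              / (((k : ℚ_[p]) + 1) * (((2 * k).choose k : ℕ) : ℚ_[p])))) =
      (n : ℚ_[p]) *
        ∑ k ∈ Finset.range ((n - 1) / 2 + 1),
          ((x : ℚ_[p]) ^ 2 + (x : ℚ_[p]) - (1 + 4 * (d : ℚ_[p])) * (k : ℚ_[p]) ^ 2
              - (1 + 2 * (d : ℚ_[p])) * (k : ℚ_[p])) *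
            ((d : ℚ_[p]) ^ (-(k : ℤ)) * gbinom p (x : ℚ_[p]) k *
                gbinom p ((x : ℚ_[p]) + (k : ℚ_[p])) k
              / ((2 * (k : ℚ_[p]) + 1) * (((2 * k).choose k : ℕ) : ℚ_[p]))) := by
  obtain ⟨m, rfl⟩ := hodd
  have hm : (2 * m + 1 - 1) / 2 = m := by omega
  have ha := binomWeight_succ hd0 (x : ℚ_[p])
  simp only [hm, div_mul_eq_div_div_swap, ← binomWeight.eq_1]
  rw [sum_range_mul_eq_of_ratio _ _ _ ha, sum_range_mul_div_succ_eq_of_ratio _ _ _ ha,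
    sum_range_mul_div_two_mul_succ_eq_of_ratio _ _ _ ha, binomWeight_zero]
  push_cast
  constructor <;> ring

theorem stmt13 (p : ℕ) [Fact p.Prime] (hp : Odd p)
    (n : ℕ) (hn : 0 < n) (hodd : Odd n) (d : ℚ) (hd0 : d ≠ 0) (x : ℤ_[p]) :
    (∑ k ∈ Finset.range ((n - 1) / 2 + 1),
        ((x : ℚ_[p]) ^ 2 + (x : ℚ_[p]) - (1 + 4 * (d : ℚ_[p])) * (k : ℚ_[p]) ^ 2
            - (1 - 2 * (d : ℚ_[p])) * (k : ℚ_[p])) *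
          ((d : ℚ_[p]) ^ (-(k : ℤ)) * gbinom p (x : ℚ_[p]) k * gbinom p ((x : ℚ_[p]) + (k : ℚ_[p])) k
            / (((2 * k).choose k : ℕ) : ℚ_[p]))) =
      -(d : ℚ_[p]) * ((n : ℚ_[p]) + 1) + (((n : ℚ_[p]) + 1) / 2) *
        ∑ k ∈ Finset.range ((n - 1) / 2 + 1),
          ((x : ℚ_[p]) ^ 2 + (x : ℚ_[p]) + 2 * (d : ℚ_[p])
              - (1 + 4 * (d : ℚ_[p])) * (k : ℚ_[p]) ^ 2
              - (1 + 2 * (d : ℚ_[p])) * (k : ℚ_[p])) *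
            ((d : ℚ_[p]) ^ (-(k : ℤ)) * gbinom p (x : ℚ_[p]) k *
                gbinom p ((x : ℚ_[p]) + (k : ℚ_[p])) k
              / (((k : ℚ_[p]) + 1) * (((2 * k).choose k : ℕ) : ℚ_[p]))) ∧
    -(d : ℚ_[p]) * ((n : ℚ_[p]) + 1) + (((n : ℚ_[p]) + 1) / 2) *
        (∑ k ∈ Finset.range ((n - 1) / 2 + 1),
          ((x : ℚ_[p]) ^ 2 + (x : ℚ_[p]) + 2 * (d : ℚ_[p])
              - (1 + 4 * (d : ℚ_[p])) * (k : ℚ_[p]) ^ 2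
              - (1 + 2 * (d : ℚ_[p])) * (k : ℚ_[p])) *
            ((d : ℚ_[p]) ^ (-(k : ℤ)) * gbinom p (x : ℚ_[p]) k *
                gbinom p ((x : ℚ_[p]) + (k : ℚ_[p])) k
              / (((k : ℚ_[p]) + 1) * (((2 * k).choose k : ℕ) : ℚ_[p])))) =
      (n : ℚ_[p]) *
        ∑ k ∈ Finset.range ((n - 1) / 2 + 1),
          ((x : ℚ_[p]) ^ 2 + (x : ℚ_[p]) - (1 + 4 * (d : ℚ_[p])) * (k : ℚ_[p]) ^ 2
              - (1 + 2 * (d : ℚ_[p])) * (k : ℚ_[p])) *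
            ((d : ℚ_[p]) ^ (-(k : ℤ)) * gbinom p (x : ℚ_[p]) k *
                gbinom p ((x : ℚ_[p]) + (k : ℚ_[p])) k
              / ((2 * (k : ℚ_[p]) + 1) * (((2 * k).choose k : ℕ) : ℚ_[p]))) :=
  stmt13_general p n hodd d hd0 x
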